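/- Fix x ∈ {0,1}^n, let C_search = (2/3)C_x + (1/3)C_I be as follows: C_I[ρ] = 2^{-n} Σ_α diag(Q_α, −Q_α) ρ diag(Q_α, −Q_α)† and C_x[ρ] = 2^{-n} Σ_{i,j} diag(|i⟩⟨j|, |i⊕x⟩⟨j⊕x|) ρ diag(|i⟩⟨j|, |i⊕x⟩⟨j⊕x|)†. Let σ = |+⟩⟨+|^{⊗(n+1)}, the 2^{n+1} × 2^{n+1} matrix all of whose entries equal 2^{-(n+1)}. Then (1/4)σ + (3/4)C_search[σ] equals the (1+n)-qubit block matrix whose two diagonal blocks both equal (1/4)|+⟩⟨+|^{⊗n} + 2^{-(n+2)} I and whose two off-diagonal blocks both equal 2^{-(n+2)} Q_x. -/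

import Mathlib

open Matrix BigOperators

/-- Bitstrings of length `n`. -/
abbrev BV (n : ℕ) : Type := Fin n → ZMod 2

/-- The Pauli X-string `Q_α`: `(Q_α)_{ij} = 1` iff `j = i ⊕ α`. -/
def Qx {n : ℕ} (α : BV n) : Matrix (BV n) (BV n) ℂ :=
  Matrix.of fun i j => if j = i + α then 1 else 0

/-- The channel `C_I[ρ] = 2^{-n} ∑_α diag(Q_α, −Q_α) ρ diag(Q_α, −Q_α)†`. -/
noncomputable def CI {n : ℕ} (ρ : Matrix (BV n ⊕ BV n) (BV n ⊕ BV n) ℂ) :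
    Matrix (BV n ⊕ BV n) (BV n ⊕ BV n) ℂ :=
  ((2 : ℂ) ^ n)⁻¹ •
    ∑ α : BV n,
      Matrix.fromBlocks (Qx α) 0 0 (-Qx α) * ρ *
        (Matrix.fromBlocks (Qx α) 0 0 (-Qx α))ᴴ

/-- The channel `C_x[ρ] = 2^{-n} ∑_{i,j} diag(|i⟩⟨j|, |i⊕x⟩⟨j⊕x|) ρ diag(...)†`. -/
noncomputable def Cx {n : ℕ} (x : BV n)
    (ρ : Matrix (BV n ⊕ BV n) (BV n ⊕ BV n) ℂ) :
    Matrix (BV n ⊕ BV n) (BV n ⊕ BV n) ℂ :=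
  ((2 : ℂ) ^ n)⁻¹ •
    ∑ i : BV n, ∑ j : BV n,
      Matrix.fromBlocks (Matrix.single i j (1 : ℂ)) 0 0
          (Matrix.single (i + x) (j + x) (1 : ℂ)) * ρ *
        (Matrix.fromBlocks (Matrix.single i j (1 : ℂ)) 0 0
          (Matrix.single (i + x) (j + x) (1 : ℂ)))ᴴ

/-- The Pauli searching oracle `C_search = (2/3) C_x + (1/3) C_I`. -/
noncomputable def Csearch {n : ℕ} (x : BV n)
    (ρ : Matrix (BV n ⊕ BV n) (BV n ⊕ BV n) ℂ) :
    Matrix (BV n ⊕ BV n) (BV n ⊕ BV n) ℂ :=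
  (2 / 3 : ℂ) • Cx x ρ + (1 / 3 : ℂ) • CI ρ

/-- `|+⟩⟨+|^{⊗n}`: the `2^n × 2^n` matrix all of whose entries equal `2^{-n}`. -/
noncomputable def plusN (n : ℕ) : Matrix (BV n) (BV n) ℂ :=
  Matrix.of fun _ _ => ((2 : ℂ) ^ n)⁻¹

/-- `σ = |+⟩⟨+|^{⊗(n+1)}`: the `2^{n+1} × 2^{n+1}` matrix all of whose entries
equal `2^{-(n+1)}`, in `(1+n)`-qubit block form. -/
noncomputable def plusAll (n : ℕ) : Matrix (BV n ⊕ BV n) (BV n ⊕ BV n) ℂ :=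
  Matrix.of fun _ _ => ((2 : ℂ) ^ (n + 1))⁻¹

/-!
With `P = |+⟩⟨+|^{⊗n}` we have `σ = ½ [[P, P], [P, P]]`. Every `Q_α` fixes `P` from both
sides, so each Kraus term of `C_I` maps `σ` to `½ [[P, -P], [-P, P]]`. In `C_x`, the product
`|i⟩⟨j| P |j'⟩⟨i'|` only sees the constant entry `P j j' = 2^{-n}`, so the sum over `j`
cancels the normalisation and the sum over `i` assembles `2^{-(n+1)} [[I, Q_x], [Q_x, I]]`.
-/

section Blocks

variable {ι l m n o α : Type*}

theorem Matrix.fromBlocks_sum [AddCommMonoid α] (s : Finset ι)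
    (A : ι → Matrix n l α) (B : ι → Matrix n m α) (C : ι → Matrix o l α)
    (D : ι → Matrix o m α) :
    ∑ i ∈ s, fromBlocks (A i) (B i) (C i) (D i)
      = fromBlocks (∑ i ∈ s, A i) (∑ i ∈ s, B i) (∑ i ∈ s, C i) (∑ i ∈ s, D i) := by
  ext (a | a) (b | b) <;> simp [Matrix.sum_apply]

theorem Matrix.fromBlocks_diagonal_mul_mul_conjTranspose [Fintype l] [Fintype m]
    [NonUnitalSemiring α] [StarRing α] (A : Matrix n l α) (D : Matrix o m α)
    (E : Matrix l l α) (F : Matrix l m α) (G : Matrix m l α) (H : Matrix m m α) :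
    fromBlocks A 0 0 D * fromBlocks E F G H * (fromBlocks A 0 0 D)ᴴ
      = fromBlocks (A * E * Aᴴ) (A * F * Dᴴ) (D * G * Aᴴ) (D * H * Dᴴ) := by
  simp [fromBlocks_conjTranspose, fromBlocks_multiply]

end Blocks

section Bitstrings

variable {n : ℕ}

theorem BV.eq_add_comm (a b c : BV n) : a = b + c ↔ b = a + c := by
  rw [← sub_eq_iff_eq_add, ZModModule.sub_eq_add, eq_comm]

theorem Qx_conjTranspose (α : BV n) : (Qx α)ᴴ = Qx α := by
  ext i j
  simp only [conjTranspose_apply, Qx, of_apply, BV.eq_add_comm i j α]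
  split <;> simp

theorem Qx_mul_plusN (α : BV n) : Qx α * plusN n = plusN n := by
  ext i j
  simp [mul_apply, Qx, plusN]

theorem plusN_mul_Qx (α : BV n) : plusN n * Qx α = plusN n := by
  ext i j
  simp [mul_apply, Qx, plusN, BV.eq_add_comm j]

theorem plusAll_eq_fromBlocks (n : ℕ) :
    plusAll n = (2 : ℂ)⁻¹ • fromBlocks (plusN n) (plusN n) (plusN n) (plusN n) := by
  ext (a | a) (b | b) <;> simp [plusAll, plusN, pow_succ, mul_comm]

theorem sum_single_add_right (x : BV n) :
    ∑ i : BV n, single i (i + x) (1 : ℂ) = Qx x := by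
  ext a b
  simp [Matrix.sum_apply, single, ite_and, Qx, eq_comm]

theorem sum_single_add_left (x : BV n) :
    ∑ i : BV n, single (i + x) i (1 : ℂ) = Qx x := by
  rw [← sum_single_add_right x]
  exact Fintype.sum_equiv (Equiv.addRight x) _ _ fun _ => by
    simp [add_assoc, ZModModule.add_self]

theorem sum_single_add_add (x : BV n) :
    ∑ i : BV n, single (i + x) (i + x) (1 : ℂ) = 1 := by
  rw [← sum_single_one]
  exact Fintype.sum_equiv (Equiv.addRight x) _ _ fun _ => rfl

theorem card_BV (n : ℕ) : Fintype.card (BV n) = 2 ^ n := by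
  simp

theorem CI_plusAll (n : ℕ) :
    CI (plusAll n)
      = (2 : ℂ)⁻¹ • fromBlocks (plusN n) (-plusN n) (-plusN n) (plusN n) := by
  have term (α : BV n) :
      fromBlocks (Qx α) 0 0 (-Qx α) * plusAll n * (fromBlocks (Qx α) 0 0 (-Qx α))ᴴ
        = (2 : ℂ)⁻¹ • fromBlocks (plusN n) (-plusN n) (-plusN n) (plusN n) := by
    rw [plusAll_eq_fromBlocks, Matrix.mul_smul, Matrix.smul_mul,
      fromBlocks_diagonal_mul_mul_conjTranspose]
    simp [Qx_conjTranspose, Qx_mul_plusN, plusN_mul_Qx]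
  simp only [CI, term, Finset.sum_const, Finset.card_univ, card_BV,
    ← Nat.cast_smul_eq_nsmul ℂ, smul_smul]
  push_cast
  rw [inv_mul_cancel_left₀ (pow_ne_zero n two_ne_zero)]

theorem Cx_plusAll (x : BV n) :
    Cx x (plusAll n) = ((2 : ℂ) ^ (n + 1))⁻¹ • fromBlocks 1 (Qx x) (Qx x) 1 := by
  have term (i j : BV n) :
      fromBlocks (single i j (1 : ℂ)) 0 0 (single (i + x) (j + x) 1) * plusAll n *
          (fromBlocks (single i j (1 : ℂ)) 0 0 (single (i + x) (j + x) 1))ᴴ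
        = ((2 : ℂ) ^ (n + 1))⁻¹ • fromBlocks (single i i 1) (single i (i + x) 1)
            (single (i + x) i 1) (single (i + x) (i + x) 1) := by
    rw [plusAll_eq_fromBlocks, Matrix.mul_smul, Matrix.smul_mul,
      fromBlocks_diagonal_mul_mul_conjTranspose]
    simp only [conjTranspose_single, star_one, single_mul_mul_single, plusN, of_apply,
      mul_one, one_mul, fromBlocks_smul, smul_single, smul_eq_mul]
    rw [pow_succ, mul_inv, mul_comm]
  simp only [Cx, term, Finset.sum_const, Finset.card_univ, card_BV,
    ← Nat.cast_smul_eq_nsmul ℂ, smul_smul, ← Finset.smul_sum]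
  push_cast
  rw [fromBlocks_sum, sum_single_one, sum_single_add_right, sum_single_add_left,
    sum_single_add_add, ← mul_assoc, inv_mul_cancel₀ (pow_ne_zero n two_ne_zero), one_mul]

end Bitstrings

/-- The output state of the search procedure: `(1/4)σ + (3/4)C_search[σ]` equals the
block matrix with both diagonal blocks `(1/4)|+⟩⟨+|^{⊗n} + 2^{-(n+2)} I` and both
off-diagonal blocks `2^{-(n+2)} Q_x`. -/
theorem pauli_search_output_state {n : ℕ} (x : BV n) :
    (1 / 4 : ℂ) • plusAll n + (3 / 4 : ℂ) • Csearch x (plusAll n)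
      = Matrix.fromBlocks
          ((1 / 4 : ℂ) • plusN n + ((2 : ℂ) ^ (n + 2))⁻¹ • 1)
          (((2 : ℂ) ^ (n + 2))⁻¹ • Qx x)
          (((2 : ℂ) ^ (n + 2))⁻¹ • Qx x)
          ((1 / 4 : ℂ) • plusN n + ((2 : ℂ) ^ (n + 2))⁻¹ • 1) := by
  rw [Csearch, CI_plusAll, Cx_plusAll, plusAll_eq_fromBlocks]
  simp only [smul_add, smul_smul, smul_neg, fromBlocks_smul, fromBlocks_add, fromBlocks_inj]
  refine ⟨?_, ?_, ?_, ?_⟩ <;>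
  · match_scalars <;> · field_simp; ring
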